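/- Under the assumptions of the previous setting, if additionally f₁ = f₂ ν-almost everywhere, then D_ψ(f₁, f₂) = 0. Conversely, if D_ψ(f₁, f₂) = 0, then f₁ = f₂ ν-almost everywhere. -/

import Mathlib

/-! Strict convexity puts the tangent line of `ψ` at `b` strictly below `ψ` away from `b`, so
the Bregman integrand is nonnegative and vanishes exactly where `f₁ = f₂`. A nonnegative
integrable function has integral zero iff it vanishes almost everywhere. -/

open MeasureTheory

namespace StrictConvexOn

variable {S : Set ℝ} {ψ : ℝ → ℝ} {a b : ℝ}

lemma add_deriv_mul_sub_lt (hψ : StrictConvexOn ℝ S ψ) (ha : a ∈ S) (hb : b ∈ S)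
    (hψb : DifferentiableAt ℝ ψ b) (hab : a ≠ b) :
    ψ b + deriv ψ b * (a - b) < ψ a := by
  rcases hab.lt_or_gt with hlt | hgt
  · have hslope := hψ.slope_lt_deriv ha hb hlt hψb
    rw [slope_def_field, div_lt_iff₀ (sub_pos.2 hlt)] at hslope
    linarith
  · have hslope := hψ.deriv_lt_slope hb ha hgt hψb
    rw [slope_def_field, lt_div_iff₀ (sub_pos.2 hgt)] at hslope
    linarith

lemma sub_sub_deriv_mul_sub_nonneg (hψ : StrictConvexOn ℝ S ψ) (ha : a ∈ S) (hb : b ∈ S)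
    (hψb : DifferentiableAt ℝ ψ b) :
    0 ≤ ψ a - ψ b - deriv ψ b * (a - b) := by
  rcases eq_or_ne a b with rfl | hab
  · simp
  · linarith [hψ.add_deriv_mul_sub_lt ha hb hψb hab]

lemma sub_sub_deriv_mul_sub_eq_zero_iff (hψ : StrictConvexOn ℝ S ψ) (ha : a ∈ S) (hb : b ∈ S)
    (hψb : DifferentiableAt ℝ ψ b) :
    ψ a - ψ b - deriv ψ b * (a - b) = 0 ↔ a = b := by
  refine ⟨fun h => ?_, fun h => by simp [h]⟩
  by_contra hab
  linarith [hψ.add_deriv_mul_sub_lt ha hb hψb hab]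

end StrictConvexOn

theorem functional_bregman_eq_zero_iff_general {Ω : Type*} [MeasurableSpace Ω]
    (ν : Measure Ω) (ψ : ℝ → ℝ)
    (hconv : StrictConvexOn ℝ (Set.Ioi (0 : ℝ)) ψ)
    (hdiff : ∀ x ∈ Set.Ioi (0 : ℝ), DifferentiableAt ℝ ψ x)
    (f₁ f₂ : Ω → ℝ)
    (hf₁ : ∀ x, 0 < f₁ x) (hf₂ : ∀ x, 0 < f₂ x)
    (hint : Integrable
      (fun x => ψ (f₁ x) - ψ (f₂ x) - deriv ψ (f₂ x) * (f₁ x - f₂ x)) ν) :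
    (f₁ =ᵐ[ν] f₂ →
      ∫ x, (ψ (f₁ x) - ψ (f₂ x) - deriv ψ (f₂ x) * (f₁ x - f₂ x)) ∂ν = 0) ∧
    ((∫ x, (ψ (f₁ x) - ψ (f₂ x) - deriv ψ (f₂ x) * (f₁ x - f₂ x)) ∂ν) = 0 →
      f₁ =ᵐ[ν] f₂) := by
  have hnonneg : 0 ≤ fun x => ψ (f₁ x) - ψ (f₂ x) - deriv ψ (f₂ x) * (f₁ x - f₂ x) :=
    fun x => hconv.sub_sub_deriv_mul_sub_nonneg (hf₁ x) (hf₂ x) (hdiff _ (hf₂ x))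
  have hae : f₁ =ᵐ[ν] f₂ ↔
      (fun x => ψ (f₁ x) - ψ (f₂ x) - deriv ψ (f₂ x) * (f₁ x - f₂ x)) =ᵐ[ν] 0 :=
    Filter.eventually_congr <| .of_forall fun x =>
      (hconv.sub_sub_deriv_mul_sub_eq_zero_iff (hf₁ x) (hf₂ x) (hdiff _ (hf₂ x))).symm
  rw [integral_eq_zero_iff_of_nonneg hnonneg hint, ← hae]
  exact ⟨id, id⟩

theorem functional_bregman_eq_zero_iff {Ω : Type*} [MeasurableSpace Ω]
    (ν : Measure Ω) [IsFiniteMeasure ν] (ψ : ℝ → ℝ)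
    (hconv : StrictConvexOn ℝ (Set.Ioi (0 : ℝ)) ψ)
    (hdiff : ∀ x ∈ Set.Ioi (0 : ℝ), DifferentiableAt ℝ ψ x)
    (f₁ f₂ : Ω → ℝ) (hf₁m : Measurable f₁) (hf₂m : Measurable f₂)
    (hf₁ : ∀ x, 0 < f₁ x) (hf₂ : ∀ x, 0 < f₂ x)
    (hint : Integrable
      (fun x => ψ (f₁ x) - ψ (f₂ x) - deriv ψ (f₂ x) * (f₁ x - f₂ x)) ν) :
    (f₁ =ᵐ[ν] f₂ →
      ∫ x, (ψ (f₁ x) - ψ (f₂ x) - deriv ψ (f₂ x) * (f₁ x - f₂ x)) ∂ν = 0) ∧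
    ((∫ x, (ψ (f₁ x) - ψ (f₂ x) - deriv ψ (f₂ x) * (f₁ x - f₂ x)) ∂ν) = 0 →
      f₁ =ᵐ[ν] f₂) :=
  functional_bregman_eq_zero_iff_general ν ψ hconv hdiff f₁ f₂ hf₁ hf₂ hint
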